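/- arXiv:2109.15154 — 2 statements merged into one kernel-verified Lean document; each statement's English description precedes it below -/
import Mathlib

section
/- Under the low-rank factor model with selection on latent factors and linear span inclusion, the expected potential outcome is identified from observed data: almost surely, ⟨U_i, V_j⟩ = Σ_{ℓ∈I} β_ℓ · E[Y_{ℓj} | σ(U,V,D)]. That is, A_{ij} := E[Y_{ij} | U_i, V_j] equals the β-weighted combination of the conditional expectations of the observed entries Y_{ℓj} for ℓ ∈ I. -/
open MeasureTheory

/-- **Identification of the causal estimand (Theorem: identification).**
Under the low-rank factor model `Y_{ab} = ⟨U_a, V_b⟩ + ε_{ab}` with selection on latent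
factors (`E[ε_{ab} | σ(U,V,D)] = 0` a.s.) and linear span inclusion
(`U_i = ∑_{ℓ ∈ I} β_ℓ U_ℓ` a.s. for a `σ(U,V,D)`-measurable `β`), and with `D_{ℓj} = 1`
a.s. for all `ℓ ∈ I` (so the `Y_{ℓj}` coincide with observed entries), the expected
potential outcome is identified from observed data: almost surely,
`⟨U_i, V_j⟩ = ∑_{ℓ ∈ I} β_ℓ · E[Y_{ℓj} | σ(U,V,D)]`. -/
theorem snn_identification
    {Ω : Type*} [MeasurableSpace Ω] (μ : Measure Ω) [IsProbabilityMeasure μ]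
    (m n r : ℕ)
    (U : Ω → (Fin m → Fin r → ℝ))
    (V : Ω → (Fin n → Fin r → ℝ))
    (D : Ω → (Fin m → Fin n → Bool))
    (hU : Measurable U) (hV : Measurable V) (hD : Measurable D)
    (G : MeasurableSpace Ω)
    (hG : G = MeasurableSpace.comap (fun ω => (U ω, V ω, D ω)) inferInstance)
    (ε : Fin m → Fin n → Ω → ℝ)
    (hεint : ∀ (a : Fin m) (b : Fin n), Integrable (ε a b) μ)
    (hεcond : ∀ (a : Fin m) (b : Fin n), μ[ε a b | G] =ᵐ[μ] 0)
    (Y : Fin m → Fin n → Ω → ℝ)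
    (hY : ∀ (a : Fin m) (b : Fin n) (ω : Ω),
      Y a b ω = (∑ k : Fin r, U ω a k * V ω b k) + ε a b ω)
    (hYint : ∀ (a : Fin m) (b : Fin n), Integrable (Y a b) μ)
    (i : Fin m) (j : Fin n) (I : Finset (Fin m))
    (hIobs : ∀ ℓ ∈ I, ∀ᵐ ω ∂μ, D ω ℓ j = true)
    (β : Ω → Fin m → ℝ)
    (hβmeas : Measurable[G] β)
    (hspan : ∀ᵐ ω ∂μ, ∀ k : Fin r, U ω i k = ∑ ℓ ∈ I, β ω ℓ * U ω ℓ k) :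
    ∀ᵐ ω ∂μ, (∑ k : Fin r, U ω i k * V ω j k)
      = ∑ ℓ ∈ I, β ω ℓ * (μ[Y ℓ j | G]) ω := by
  have hm : G ≤ _ := hG ▸ (hU.prodMk (hV.prodMk hD)).comap_le
  set f : Fin m → Ω → ℝ := fun ℓ ω => ∑ k : Fin r, U ω ℓ k * V ω j k with hf
  have hfmeas : ∀ ℓ, Measurable[G] (f ℓ) := by
    intro ℓ
    have hφ : Measurable[G] (fun ω => (U ω, V ω, D ω)) := by
      rw [hG]; exact measurable_iff_comap_le.mpr le_rfl
    have hg : Measurable (fun p : (Fin m → Fin r → ℝ) × (Fin n → Fin r → ℝ) × (Fin m → Fin n → Bool) =>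
        ∑ k : Fin r, p.1 ℓ k * p.2.1 j k) :=
      Finset.measurable_sum _ fun k _ =>
        Measurable.mul (f := fun p : (Fin m → Fin r → ℝ) × (Fin n → Fin r → ℝ) × (Fin m → Fin n → Bool) => p.1 ℓ k)
          (g := fun p : (Fin m → Fin r → ℝ) × (Fin n → Fin r → ℝ) × (Fin m → Fin n → Bool) => p.2.1 j k)
          ((measurable_pi_apply k).comp ((measurable_pi_apply ℓ).comp measurable_fst))
          ((measurable_pi_apply k).comp ((measurable_pi_apply j).comp
            (measurable_fst.comp measurable_snd)))
    exact hg.comp hφ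
  have hfint : ∀ ℓ, Integrable (f ℓ) μ := by
    intro ℓ
    have : f ℓ = Y ℓ j - ε ℓ j := by
      funext ω; simp [hf, hY ℓ j ω]
    rw [this]; exact (hYint ℓ j).sub (hεint ℓ j)
  have hkey : ∀ ℓ, (μ[Y ℓ j | G]) =ᵐ[μ] f ℓ := by
    intro ℓ
    have h1 : (μ[Y ℓ j | G]) =ᵐ[μ] (μ[f ℓ + ε ℓ j | G]) := by
      refine condExp_congr_ae (Filter.Eventually.of_forall fun ω => ?_)
      simp [hf, hY ℓ j ω]
    have h2 : (μ[f ℓ + ε ℓ j | G]) =ᵐ[μ] (μ[f ℓ | G]) + (μ[ε ℓ j | G]) :=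
      condExp_add (hfint ℓ) (hεint ℓ j) G
    have h3 : (μ[f ℓ | G]) = f ℓ :=
      condExp_of_stronglyMeasurable hm ((hfmeas ℓ).stronglyMeasurable) (hfint ℓ)
    calc (μ[Y ℓ j | G]) =ᵐ[μ] (μ[f ℓ + ε ℓ j | G]) := h1
      _ =ᵐ[μ] (μ[f ℓ | G]) + (μ[ε ℓ j | G]) := h2
      _ =ᵐ[μ] f ℓ + 0 := by rw [h3]; exact Filter.EventuallyEq.add (by rfl) (hεcond ℓ j)
      _ = f ℓ := by simp
  have hall : ∀ᵐ ω ∂μ, ∀ ℓ : Fin m, (μ[Y ℓ j | G]) ω = f ℓ ω := ae_all_iff.mpr hkey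
  filter_upwards [hall, hspan] with ω hω hsp
  calc (∑ k : Fin r, U ω i k * V ω j k)
      = ∑ k : Fin r, (∑ ℓ ∈ I, β ω ℓ * U ω ℓ k) * V ω j k := by
        exact Finset.sum_congr rfl fun k _ => by rw [hsp k]
    _ = ∑ ℓ ∈ I, β ω ℓ * ∑ k : Fin r, U ω ℓ k * V ω j k := by
        simp_rw [Finset.sum_mul, Finset.mul_sum]
        rw [Finset.sum_comm]
        exact Finset.sum_congr rfl fun ℓ _ => Finset.sum_congr rfl fun k _ => by ring
    _ = ∑ ℓ ∈ I, β ω ℓ * (μ[Y ℓ j | G]) ω :=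
        Finset.sum_congr rfl fun ℓ _ => by rw [hω ℓ]
end

section
/- Existence of anchor rows and columns under MCAR (fixed entry): let the entries D_{ab}, (a,b) ∈ [L]×[L], be i.i.d. Bernoulli(p) random variables, let Q ≥ 2 be an integer dividing L−1, and suppose p^{2Q²} ≥ 10 · Q · log(L−1) / (L−1). Then with probability at least 1 − (L−1)^{−10}, there exist sets R ⊆ [L]∖{1} and C ⊆ [L]∖{1} with |R| = |C| = Q such that D_{ab} = 1 for every (a,b) ∈ ({1} ∪ R) × ({1} ∪ C) with (a,b) ≠ (1,1); that is, entry (1,1) admits Q anchor rows and Q anchor columns forming a fully revealed submatrix. -/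
open MeasureTheory ProbabilityTheory

/-- For an entry `(i,j)` of an `L × L` Boolean mask `D`, `HasAnchors D Q i j` says that
there exist a set `R` of `Q` rows distinct from `i` and a set `C` of `Q` columns distinct
from `j` such that `D a b = 1` for every `(a,b) ∈ ({i} ∪ R) × ({j} ∪ C)` with
`(a,b) ≠ (i,j)`. -/
def HasAnchors {L : ℕ} (D : Fin L → Fin L → Bool) (Q : ℕ) (i j : Fin L) : Prop :=
  ∃ R C : Finset (Fin L), i ∉ R ∧ j ∉ C ∧ R.card = Q ∧ C.card = Q ∧
    ∀ a ∈ insert i R, ∀ b ∈ insert j C, (a, b) ≠ (i, j) → D a b = true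

/-!
Split the `L - 1 = m Q` indices other than `0` into `m` disjoint blocks `B₁, …, Bₘ` of size `Q`.
Taking `R = C = Bₖ` requires the `Q² + 2Q` entries of `({0} ∪ Bₖ)²` other than `(0,0)` to be
revealed, an event of probability `y = p^(Q² + 2Q) ≥ p^(2Q²)`. These entry sets are disjoint for
different blocks, so the `m` events are independent and all of them fail with probability
`(1 - y)^m ≤ exp(-m y) ≤ exp(-10 log (L - 1))`, because `m y ≥ 10 m Q log (L - 1) / (L - 1)`.
-/

open Function

namespace ProbabilityTheory

variable {Ω ι κ β : Type*} [MeasurableSpace Ω] {μ : Measure Ω} [MeasurableSpace β]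
  {X : ι → Ω → β} {S : ι → Set β}

theorem iIndepFun.measure_biInter_preimage (hX : iIndepFun X μ) (hS : ∀ i, MeasurableSet (S i))
    (T : Finset ι) : μ (⋂ i ∈ T, X i ⁻¹' S i) = ∏ i ∈ T, μ (X i ⁻¹' S i) :=
  hX.meas_biInter fun i _ => ⟨S i, hS i, rfl⟩

theorem iIndepFun.iIndepSet_biInter_preimage [DecidableEq ι] (hX : iIndepFun X μ)
    (hXm : ∀ i, Measurable (X i)) (hS : ∀ i, MeasurableSet (S i)) {T : κ → Finset ι}
    (hT : Pairwise (Disjoint on T)) : iIndepSet (fun k => ⋂ i ∈ T k, X i ⁻¹' S i) μ := by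
  refine (iIndepSet_iff_meas_biInter fun k =>
    Finset.measurableSet_biInter _ fun i _ => hXm i (hS i)).2 fun s => ?_
  rw [← Finset.set_biInter_biUnion, hX.measure_biInter_preimage hS,
    Finset.prod_biUnion fun k _ k' _ hkk' => hT hkk']
  exact Finset.prod_congr rfl fun k _ => (hX.measure_biInter_preimage hS (T k)).symm

theorem iIndepSet.measure_iInter_compl [Fintype κ] {A : κ → Set Ω} (h : iIndepSet A μ) :
    μ (⋂ k, (A k)ᶜ) = ∏ k, μ (A k)ᶜ :=
  ((iIndepSet_iff_iIndep A μ).1 h).meas_iInter fun k =>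
    (MeasurableSpace.measurableSet_generateFrom (Set.mem_singleton (A k))).compl

end ProbabilityTheory

theorem Finset.exists_pairwise_disjoint_card_eq_avoiding {α : Type*} [Fintype α] (i : α)
    {m Q : ℕ} (h : m * Q + 1 ≤ Fintype.card α) :
    ∃ B : Fin m → Finset α, Pairwise (Disjoint on B) ∧ ∀ k, i ∉ B k ∧ (B k).card = Q := by
  classical
  obtain ⟨e⟩ : Nonempty (Fin m × Fin Q ↪ {a // a ≠ i}) :=
    Function.Embedding.nonempty_of_card_le (by
      rw [Fintype.card_prod, Fintype.card_fin, Fintype.card_fin, Fintype.card_subtype_compl,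
        Fintype.card_subtype_eq]
      omega)
  let f (k : Fin m) : Fin Q ↪ α := ⟨fun t => e (k, t), fun t t' h =>
    (Prod.ext_iff.1 (e.injective (Subtype.ext h))).2⟩
  refine ⟨fun k => univ.map (f k), fun k k' hkk' => ?_, fun k => ⟨?_, by simp⟩⟩
  · simp only [Finset.disjoint_left, Finset.mem_map, Finset.mem_univ, true_and]
    rintro _ ⟨t, rfl⟩ ⟨t', h⟩
    exact hkk' (Prod.ext_iff.1 (e.injective (Subtype.ext h))).1.symm
  · simp only [Finset.mem_map, Finset.mem_univ, true_and, not_exists]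
    exact fun t => (e (k, t)).2

section AnchorPattern

variable {α : Type*} [DecidableEq α] {i j : α} {R C R' C' : Finset α}

def anchorPattern (i j : α) (R C : Finset α) : Finset (α × α) :=
  (insert i R ×ˢ insert j C).erase (i, j)

theorem card_anchorPattern (hi : i ∉ R) (hj : j ∉ C) :
    (anchorPattern i j R C).card = R.card * C.card + R.card + C.card := by
  rw [anchorPattern, Finset.card_erase_of_mem (by simp), Finset.card_product,
    Finset.card_insert_of_notMem hi, Finset.card_insert_of_notMem hj]
  ring_nf
  omega

theorem disjoint_anchorPattern (hR : Disjoint R R') (hC : Disjoint C C') :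
    Disjoint (anchorPattern i j R C) (anchorPattern i j R' C') := by
  simp only [anchorPattern, Finset.disjoint_left, Finset.mem_erase, Finset.mem_product,
    Finset.mem_insert, and_imp, Prod.forall, ne_eq, Prod.mk.injEq, not_and]
  intro a b hab ha hb _ ha' hb'
  obtain rfl : a = i := by
    rcases ha with rfl | ha <;> rcases ha' with h | ha'
    exacts [rfl, rfl, h, (Finset.disjoint_left.1 hR ha ha').elim]
  rcases hb with rfl | hb <;> rcases hb' with h | hb'
  exacts [hab rfl rfl, hab rfl rfl, hab rfl h, Finset.disjoint_left.1 hC hb hb']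

theorem hasAnchors_of_anchorPattern {L Q : ℕ} {D : Fin L → Fin L → Bool} {i j : Fin L}
    {R C : Finset (Fin L)} (hi : i ∉ R) (hj : j ∉ C) (hR : R.card = Q) (hC : C.card = Q)
    (h : ∀ q ∈ anchorPattern i j R C, D q.1 q.2 = true) : HasAnchors D Q i j :=
  ⟨R, C, hi, hj, hR, hC, fun a ha b hb hab =>
    h (a, b) (Finset.mem_erase.2 ⟨hab, Finset.mem_product.2 ⟨ha, hb⟩⟩)⟩

end AnchorPattern

theorem one_sub_pow_le_inv_pow_of_log_le {x y : ℝ} {m k : ℕ} (hx : 0 < x) (hy : y ≤ 1)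
    (h : k * Real.log x ≤ m * y) : (1 - y) ^ m ≤ (x ^ k)⁻¹ :=
  calc (1 - y) ^ m ≤ Real.exp (-y) ^ m :=
        pow_le_pow_left₀ (by linarith) (Real.one_sub_le_exp_neg y) m
    _ = Real.exp (-(m * y)) := by rw [← Real.exp_nat_mul]; ring_nf
    _ ≤ Real.exp (-(k * Real.log x)) := Real.exp_le_exp.2 (neg_le_neg h)
    _ = (x ^ k)⁻¹ := by rw [Real.exp_neg, Real.exp_nat_mul, Real.exp_log hx]

theorem measure_hasAnchors_ge {Ω : Type*} [MeasurableSpace Ω] {μ : Measure Ω}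
    [IsProbabilityMeasure μ] {L : ℕ} {D : Ω → Fin L → Fin L → Bool}
    (hmeas : ∀ a b : Fin L, Measurable fun ω => D ω a b)
    (hindep : iIndepFun (fun q : Fin L × Fin L => fun ω => D ω q.1 q.2) μ) {p : ℝ}
    (hbern : ∀ a b : Fin L, μ {ω | D ω a b = true} = ENNReal.ofReal p)
    (i : Fin L) {Q m : ℕ} (hmQ : m * Q + 1 ≤ L) :
    1 - (1 - ENNReal.ofReal p ^ (Q ^ 2 + 2 * Q)) ^ m ≤ μ {ω | HasAnchors (D ω) Q i i} := by
  classical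
  obtain ⟨B, hB_disj, hB⟩ :=
    Finset.exists_pairwise_disjoint_card_eq_avoiding i (m := m) (Q := Q) (by simpa using hmQ)
  let A : Fin m → Set Ω := fun k =>
    ⋂ q ∈ anchorPattern i i (B k) (B k), (fun ω => D ω q.1 q.2) ⁻¹' {true}
  have hA_meas (k : Fin m) : MeasurableSet (A k) :=
    Finset.measurableSet_biInter _ fun q _ => hmeas q.1 q.2 (measurableSet_singleton true)
  have hA_indep : iIndepSet A μ :=
    hindep.iIndepSet_biInter_preimage (fun q => hmeas q.1 q.2)
      (fun _ => measurableSet_singleton true) fun k k' h =>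
        disjoint_anchorPattern (hB_disj h) (hB_disj h)
  have hA_prob (k : Fin m) : μ (A k) = ENNReal.ofReal p ^ (Q ^ 2 + 2 * Q) := by
    rw [hindep.measure_biInter_preimage (fun _ => measurableSet_singleton true),
      Finset.prod_congr rfl fun q _ => hbern q.1 q.2, Finset.prod_const,
      card_anchorPattern (hB k).1 (hB k).1, (hB k).2]
    ring_nf
  have hsucc : (⋂ k, (A k)ᶜ)ᶜ ⊆ {ω | HasAnchors (D ω) Q i i} := by
    intro ω hω
    simp only [Set.compl_iInter, compl_compl, Set.mem_iUnion] at hω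
    obtain ⟨k, hk⟩ := hω
    exact hasAnchors_of_anchorPattern (hB k).1 (hB k).1 (hB k).2 (hB k).2 fun q hq =>
      Set.mem_iInter₂.1 hk q hq
  calc 1 - (1 - ENNReal.ofReal p ^ (Q ^ 2 + 2 * Q)) ^ m = 1 - μ (⋂ k, (A k)ᶜ) := by
        simp only [hA_indep.measure_iInter_compl, prob_compl_eq_one_sub (hA_meas _), hA_prob,
          Finset.prod_const, Finset.card_univ, Fintype.card_fin]
    _ = μ (⋂ k, (A k)ᶜ)ᶜ :=
        (prob_compl_eq_one_sub (MeasurableSet.iInter fun k => (hA_meas k).compl)).symm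
    _ ≤ _ := measure_mono hsucc

/-- **Existence of anchor rows and columns under MCAR (fixed entry).**
Let the entries `D_{ab}`, `(a,b) ∈ [L] × [L]`, be i.i.d. Bernoulli(p), let `Q ≥ 2` divide
`L − 1`, and suppose `p^{2Q²} ≥ 10 · Q · log(L−1) / (L−1)`.  Then with probability at least
`1 − (L−1)^{−10}`, the entry `(1,1)` admits `Q` anchor rows and `Q` anchor columns forming
a fully revealed submatrix. -/
theorem anchors_exist_mcar_fixed_entry
    {Ω : Type*} [MeasurableSpace Ω] (μ : Measure Ω) [IsProbabilityMeasure μ]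
    (L Q : ℕ) (hL : 2 ≤ L) (hQ : 2 ≤ Q) (hdvd : Q ∣ (L - 1))
    (p : ℝ) (hp0 : 0 ≤ p) (hp1 : p ≤ 1)
    (hp : 10 * (Q : ℝ) * Real.log ((L : ℝ) - 1) / ((L : ℝ) - 1) ≤ p ^ (2 * Q ^ 2))
    (D : Ω → Fin L → Fin L → Bool)
    (hmeas : ∀ a b : Fin L, Measurable fun ω => D ω a b)
    (hindep : iIndepFun
      (fun q : Fin L × Fin L => fun ω => D ω q.1 q.2) μ)
    (hbern : ∀ a b : Fin L, μ {ω | D ω a b = true} = ENNReal.ofReal p) :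
    1 - (ENNReal.ofReal (((L : ℝ) - 1) ^ (10 : ℕ)))⁻¹
      ≤ μ {ω | HasAnchors (D ω) Q (⟨0, by omega⟩ : Fin L) (⟨0, by omega⟩ : Fin L)} := by
  obtain ⟨m, hm⟩ := hdvd
  have hL_sub : (L : ℝ) - 1 = Q * m := by
    rw [← Nat.cast_one, ← Nat.cast_sub (by omega), hm, Nat.cast_mul]
  have hL_pos : (0 : ℝ) < L - 1 := by linarith [show (2 : ℝ) ≤ L by exact_mod_cast hL]
  have hy : p ^ (Q ^ 2 + 2 * Q) ≤ 1 := pow_le_one₀ hp0 hp1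
  have hrate : ((10 : ℕ) : ℝ) * Real.log ((L : ℝ) - 1) ≤ m * p ^ (Q ^ 2 + 2 * Q) :=
    calc ((10 : ℕ) : ℝ) * Real.log ((L : ℝ) - 1)
        = m * (10 * Q * Real.log ((L : ℝ) - 1) / ((L : ℝ) - 1)) := by
          rw [mul_div_assoc', eq_div_iff hL_pos.ne']
          linear_combination (10 * Real.log ((L : ℝ) - 1)) * hL_sub
      _ ≤ m * p ^ (Q ^ 2 + 2 * Q) := by
          gcongr
          exact hp.trans (pow_le_pow_of_le_one hp0 hp1 (by nlinarith))
  have hfail : (1 - ENNReal.ofReal p ^ (Q ^ 2 + 2 * Q)) ^ m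
      ≤ (ENNReal.ofReal (((L : ℝ) - 1) ^ (10 : ℕ)))⁻¹ := by
    rw [← ENNReal.ofReal_pow hp0, ← ENNReal.ofReal_one, ← ENNReal.ofReal_sub _ (by positivity),
      ← ENNReal.ofReal_pow (sub_nonneg.2 hy), ← ENNReal.ofReal_inv_of_pos (by positivity)]
    exact ENNReal.ofReal_le_ofReal (one_sub_pow_le_inv_pow_of_log_le hL_pos hy hrate)
  exact (tsub_le_tsub_left hfail 1).trans
    (measure_hasAnchors_ge hmeas hindep hbern _ (by rw [mul_comm, ← hm]; omega))
end
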